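/- arXiv:1008.4462 — 5 statements merged into one kernel-verified Lean document; each statement's English description precedes it below -/
import Mathlib

section
/- Let B be a (not necessarily commutative) integral domain and let x and y be nonzero normal elements of B (i.e., xB = Bx and yB = By). If y is regular modulo the two-sided ideal generated by x, then x is regular modulo the two-sided ideal generated by y. -/
/-- An element `x` of a ring `B` is *normal* if `xB = Bx`. -/
def IsNormalElem {B : Type*} [Ring B] (x : B) : Prop :=
  Set.range (fun b => x * b) = Set.range (fun b => b * x)

/-- An element `a` is *regular modulo a two-sided ideal* `I` if its image in `B/I`
is neither a left nor a right zero divisor. -/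
def IsRegularMod {B : Type*} [Ring B] (I : TwoSidedIdeal B) (a : B) : Prop :=
  (∀ b : B, a * b ∈ I → b ∈ I) ∧ (∀ b : B, b * a ∈ I → b ∈ I)

section Aux

variable {B : Type*} [Ring B]

/-- Moving `x` from right to left across an element. -/
lemma IsNormalElem.comm_right {x : B} (hx : IsNormalElem x) (b : B) :
    ∃ c : B, b * x = x * c := by
  have : b * x ∈ Set.range (fun b => x * b) := by
    rw [hx]; exact ⟨b, rfl⟩
  obtain ⟨c, hc⟩ := this
  exact ⟨c, hc.symm⟩

/-- Moving `x` from left to right across an element. -/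
lemma IsNormalElem.comm_left {x : B} (hx : IsNormalElem x) (b : B) :
    ∃ c : B, x * b = c * x := by
  have : x * b ∈ Set.range (fun b => b * x) := by
    rw [← hx]; exact ⟨b, rfl⟩
  obtain ⟨c, hc⟩ := this
  exact ⟨c, hc.symm⟩

/-- For a normal element `x`, the two-sided ideal generated by `x` is `xB`. -/
lemma mem_span_normal_iff {x : B} (hx : IsNormalElem x) (a : B) :
    a ∈ TwoSidedIdeal.span {x} ↔ ∃ c : B, a = x * c := by
  set I : TwoSidedIdeal B := TwoSidedIdeal.mk' {a : B | ∃ c : B, a = x * c}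
    ⟨0, by simp⟩
    (fun {u v} ⟨c, hc⟩ ⟨d, hd⟩ => ⟨c + d, by rw [hc, hd, mul_add]⟩)
    (fun {u} ⟨c, hc⟩ => ⟨-c, by rw [hc, mul_neg]⟩)
    (fun {u v} ⟨c, hc⟩ => by
      obtain ⟨e, he⟩ := hx.comm_right u
      exact ⟨e * c, by rw [hc, ← mul_assoc, he, mul_assoc]⟩)
    (fun {u v} ⟨c, hc⟩ => ⟨c * v, by rw [hc, mul_assoc]⟩) with hI
  have hmem : ∀ a : B, a ∈ I ↔ ∃ c : B, a = x * c := fun a => by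
    rw [hI, TwoSidedIdeal.mem_mk']; simp [Set.mem_setOf_eq]
  constructor
  · intro ha
    have := TwoSidedIdeal.mem_span_iff.mp ha I (by
      intro z hz
      rw [Set.mem_singleton_iff] at hz
      rw [SetLike.mem_coe, hmem]
      exact ⟨1, by rw [hz, mul_one]⟩)
    exact (hmem a).mp this
  · rintro ⟨c, rfl⟩
    exact TwoSidedIdeal.mul_mem_right _ _ _ (TwoSidedIdeal.subset_span rfl)

/-- For a normal element `x`, the two-sided ideal generated by `x` is also `Bx`. -/
lemma mem_span_normal_iff' {x : B} (hx : IsNormalElem x) (a : B) :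
    a ∈ TwoSidedIdeal.span {x} ↔ ∃ c : B, a = c * x := by
  rw [mem_span_normal_iff hx]
  constructor
  · rintro ⟨c, rfl⟩
    obtain ⟨d, hd⟩ := hx.comm_left c
    exact ⟨d, hd⟩
  · rintro ⟨c, rfl⟩
    obtain ⟨d, hd⟩ := hx.comm_right c
    exact ⟨d, hd⟩

end Aux

/-- Let `B` be a (not necessarily commutative) domain, and `x`, `y` nonzero normal
elements of `B`. If `y` is regular modulo the two-sided ideal generated by `x`,
then `x` is regular modulo the two-sided ideal generated by `y`. -/
theorem regular_swap_of_normal {B : Type*} [Ring B] [IsDomain B] (x y : B)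
    (hx0 : x ≠ 0) (hy0 : y ≠ 0) (hx : IsNormalElem x) (hy : IsNormalElem y)
    (h : IsRegularMod (TwoSidedIdeal.span {x}) y) :
    IsRegularMod (TwoSidedIdeal.span {y}) x := by
  obtain ⟨hl, hr⟩ := h
  constructor
  · -- x * b ∈ (y) → b ∈ (y)
    intro b hb
    rw [mem_span_normal_iff hy] at hb
    obtain ⟨c, hc⟩ := hb
    -- x * b = y * c; rewrite y * c = c' * y
    obtain ⟨c', hc'⟩ := hy.comm_left c
    -- x * b = c' * y, so c' * y ∈ (x), hence c' ∈ (x)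
    have hc'x : c' ∈ TwoSidedIdeal.span {x} := by
      apply hr
      rw [mem_span_normal_iff hx]
      exact ⟨b, by rw [← hc', ← hc]⟩
    rw [mem_span_normal_iff hx] at hc'x
    obtain ⟨d, hd⟩ := hc'x
    -- x * b = x * d * y, cancel x
    have : x * b = x * (d * y) := by
      rw [hc, hc', hd, mul_assoc]
    have hb' : b = d * y := mul_left_cancel₀ hx0 this
    rw [mem_span_normal_iff' hy]
    exact ⟨d, hb'⟩
  · -- b * x ∈ (y) → b ∈ (y)
    intro b hb
    rw [mem_span_normal_iff hy] at hb
    obtain ⟨c, hc⟩ := hb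
    have hcx : c ∈ TwoSidedIdeal.span {x} := by
      apply hl
      rw [mem_span_normal_iff' hx]
      exact ⟨b, hc.symm⟩
    rw [mem_span_normal_iff' hx] at hcx
    obtain ⟨d, hd⟩ := hcx
    have : b * x = (y * d) * x := by
      rw [hc, hd, mul_assoc]
    have hb' : b = y * d := mul_right_cancel₀ hx0 this
    rw [mem_span_normal_iff hy]
    exact ⟨d, hb'⟩
end

section
/- Let B be a domain and let x, y, z be nonzero normal elements of B. If y is regular modulo the ideal generated by x, and z is regular modulo the ideal generated by {x, y}, then x is regular modulo the ideal generated by {y, z}. -/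
section Aux
variable {B : Type*} [Ring B]

lemma normal_comm_left {x : B} (hx : IsNormalElem x) (b : B) : ∃ c, b * x = x * c := by
  have : b * x ∈ Set.range (fun b => x * b) := by rw [hx]; exact ⟨b, rfl⟩
  obtain ⟨c, hc⟩ := this; exact ⟨c, hc.symm⟩

lemma normal_comm_right {x : B} (hx : IsNormalElem x) (b : B) : ∃ c, x * b = c * x := by
  have : x * b ∈ Set.range (fun b => b * x) := by rw [← hx]; exact ⟨b, rfl⟩
  obtain ⟨c, hc⟩ := this; exact ⟨c, hc.symm⟩

/-- For normal `x`, the right multiples `xB` form a two-sided ideal. -/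
def normalIdeal {x : B} (hx : IsNormalElem x) : TwoSidedIdeal B :=
  TwoSidedIdeal.mk' {b | ∃ c, x * c = b}
    ⟨0, mul_zero x⟩
    (fun {a b} ⟨c, hc⟩ ⟨d, hd⟩ => ⟨c + d, by rw [mul_add, hc, hd]⟩)
    (fun {a} ⟨c, hc⟩ => ⟨-c, by rw [mul_neg, hc]⟩)
    (fun {a b} ⟨c, hc⟩ => by
      obtain ⟨a', ha'⟩ := normal_comm_left hx a
      exact ⟨a' * c, by rw [← hc, ← mul_assoc, ← mul_assoc, ← ha']⟩)
    (fun {a b} ⟨c, hc⟩ => ⟨c * b, by rw [← hc, mul_assoc]⟩)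

lemma mem_normalIdeal_iff {x : B} (hx : IsNormalElem x) (b : B) :
    b ∈ normalIdeal hx ↔ ∃ c, x * c = b := TwoSidedIdeal.mem_mk' _ _ _ _ _ _ b

lemma mem_span_single_iff {x : B} (hx : IsNormalElem x) (b : B) :
    b ∈ TwoSidedIdeal.span {x} ↔ ∃ c, x * c = b := by
  constructor
  · intro hb
    rw [TwoSidedIdeal.mem_span_iff] at hb
    exact (mem_normalIdeal_iff hx b).1 <| hb _ (by
      intro t ht
      rw [Set.mem_singleton_iff] at ht
      subst ht
      exact (mem_normalIdeal_iff hx t).2 ⟨1, mul_one t⟩)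
  · rintro ⟨c, rfl⟩
    exact TwoSidedIdeal.mul_mem_right _ _ _ (TwoSidedIdeal.subset_span rfl)

lemma mem_span_single_iff' {x : B} (hx : IsNormalElem x) (b : B) :
    b ∈ TwoSidedIdeal.span {x} ↔ ∃ c, c * x = b := by
  rw [mem_span_single_iff hx]
  constructor
  · rintro ⟨c, rfl⟩; obtain ⟨c', hc'⟩ := normal_comm_right hx c; exact ⟨c', hc'.symm⟩
  · rintro ⟨c, rfl⟩; obtain ⟨c', hc'⟩ := normal_comm_left hx c; exact ⟨c', hc'.symm⟩

/-- For normal `x, y`, the set `xB + yB` as a two-sided ideal. -/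
def normalIdeal₂ {x y : B} (hx : IsNormalElem x) (hy : IsNormalElem y) : TwoSidedIdeal B :=
  TwoSidedIdeal.mk' {b | ∃ c d, x * c + y * d = b}
    ⟨0, 0, by simp⟩
    (fun {a b} ⟨c, d, hcd⟩ ⟨c', d', hcd'⟩ =>
      ⟨c + c', d + d', by rw [mul_add, mul_add, ← hcd, ← hcd']; abel⟩)
    (fun {a} ⟨c, d, hcd⟩ => ⟨-c, -d, by rw [mul_neg, mul_neg, ← hcd]; abel⟩)
    (fun {a b} ⟨c, d, hcd⟩ => by
      obtain ⟨a', ha'⟩ := normal_comm_left hx a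
      obtain ⟨a'', ha''⟩ := normal_comm_left hy a
      refine ⟨a' * c, a'' * d, ?_⟩
      rw [← hcd, mul_add, ← mul_assoc, ← mul_assoc, ← ha', ← mul_assoc, ← mul_assoc, ← ha'',
        mul_assoc, mul_assoc])
    (fun {a b} ⟨c, d, hcd⟩ => ⟨c * b, d * b, by rw [← hcd, add_mul, mul_assoc, mul_assoc]⟩)

lemma mem_span_pair_iff {x y : B} (hx : IsNormalElem x) (hy : IsNormalElem y) (b : B) :
    b ∈ TwoSidedIdeal.span {x, y} ↔ ∃ c d, x * c + y * d = b := by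
  constructor
  · intro hb
    rw [TwoSidedIdeal.mem_span_iff] at hb
    have := hb (normalIdeal₂ hx hy) (by
      rintro t (rfl | rfl)
      · exact (TwoSidedIdeal.mem_mk' _ _ _ _ _ _ t).2 ⟨1, 0, by simp⟩
      · exact (TwoSidedIdeal.mem_mk' _ _ _ _ _ _ t).2 ⟨0, 1, by simp⟩)
    exact (TwoSidedIdeal.mem_mk' _ _ _ _ _ _ b).1 this
  · rintro ⟨c, d, rfl⟩
    exact TwoSidedIdeal.add_mem _
      (TwoSidedIdeal.mul_mem_right _ _ _ (TwoSidedIdeal.subset_span (by left; rfl)))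
      (TwoSidedIdeal.mul_mem_right _ _ _ (TwoSidedIdeal.subset_span (by right; rfl)))

lemma mem_span_pair_iff' {x y : B} (hx : IsNormalElem x) (hy : IsNormalElem y) (b : B) :
    b ∈ TwoSidedIdeal.span {x, y} ↔ ∃ c d, c * x + d * y = b := by
  rw [mem_span_pair_iff hx hy]
  constructor
  · rintro ⟨c, d, rfl⟩
    obtain ⟨c', hc'⟩ := normal_comm_right hx c
    obtain ⟨d', hd'⟩ := normal_comm_right hy d
    exact ⟨c', d', by rw [← hc', ← hd']⟩
  · rintro ⟨c, d, rfl⟩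
    obtain ⟨c', hc'⟩ := normal_comm_left hx c
    obtain ⟨d', hd'⟩ := normal_comm_left hy d
    exact ⟨c', d', by rw [← hc', ← hd']⟩

end Aux

section Domain
variable {B : Type*} [Ring B] [IsDomain B]

/-- In a domain with `x, y` normal and `x ≠ 0`, if `y` is regular mod `(x)` then
`x` is regular mod `(y)`. -/
lemma regular_swap {x y : B} (hx0 : x ≠ 0) (hx : IsNormalElem x) (hy : IsNormalElem y)
    (h1 : IsRegularMod (TwoSidedIdeal.span {x}) y) :
    IsRegularMod (TwoSidedIdeal.span {y}) x := by
  constructor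
  · intro a ha
    obtain ⟨c, hc⟩ := (mem_span_single_iff' hy (x * a)).1 ha
    have hcx : c * y ∈ TwoSidedIdeal.span {x} :=
      hc ▸ (mem_span_single_iff hx (x * a)).2 ⟨a, rfl⟩
    obtain ⟨c₁, hc₁⟩ := (mem_span_single_iff hx c).1 (h1.2 c hcx)
    have : x * a = x * (c₁ * y) := by rw [← hc, ← hc₁, mul_assoc]
    rw [mul_left_cancel₀ hx0 this]
    exact (mem_span_single_iff' hy _).2 ⟨c₁, rfl⟩
  · intro a ha
    obtain ⟨c, hc⟩ := (mem_span_single_iff hy (a * x)).1 ha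
    have hcx : y * c ∈ TwoSidedIdeal.span {x} :=
      hc ▸ (mem_span_single_iff' hx (a * x)).2 ⟨a, rfl⟩
    obtain ⟨c₁, hc₁⟩ := (mem_span_single_iff' hx c).1 (h1.1 c hcx)
    have : a * x = (y * c₁) * x := by rw [← hc, ← hc₁, mul_assoc]
    rw [mul_right_cancel₀ hx0 this]
    exact (mem_span_single_iff hy _).2 ⟨c₁, rfl⟩

end Domain

/-- Let `B` be a domain and `x, y, z` nonzero normal elements of `B`.  If `y` is
regular modulo the two-sided ideal generated by `x`, and `z` is regular modulo the
two-sided ideal generated by `{x, y}`, then `x` is regular modulo the two-sided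
ideal generated by `{y, z}`. -/
theorem regular_swap_of_normal_three {B : Type*} [Ring B] [IsDomain B] (x y z : B)
    (hx0 : x ≠ 0) (hy0 : y ≠ 0) (hz0 : z ≠ 0)
    (hx : IsNormalElem x) (hy : IsNormalElem y) (hz : IsNormalElem z)
    (h1 : IsRegularMod (TwoSidedIdeal.span {x}) y)
    (h2 : IsRegularMod (TwoSidedIdeal.span {x, y}) z) :
    IsRegularMod (TwoSidedIdeal.span {y, z}) x := by
  have hswap := regular_swap hx0 hx hy h1
  have hy_sub : TwoSidedIdeal.span {y} ≤ TwoSidedIdeal.span ({y, z} : Set B) :=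
    TwoSidedIdeal.span_mono (by intro t ht; left; exact ht)
  have hz_mem : z ∈ TwoSidedIdeal.span ({y, z} : Set B) :=
    TwoSidedIdeal.subset_span (by right; rfl)
  constructor
  · intro b hb
    obtain ⟨u, c, huc⟩ := (mem_span_pair_iff' hy hz (x * b)).1 hb
    -- c * z ∈ (x, y)
    have hcz : c * z ∈ TwoSidedIdeal.span ({x, y} : Set B) := by
      have : c * z = x * b - u * y := by rw [← huc]; noncomm_ring
      rw [this]
      exact TwoSidedIdeal.sub_mem _
        (TwoSidedIdeal.mul_mem_right _ _ _ (TwoSidedIdeal.subset_span (by left; rfl)))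
        (TwoSidedIdeal.mul_mem_left _ _ _ (TwoSidedIdeal.subset_span (by right; rfl)))
    obtain ⟨c₁, v, hcv⟩ := (mem_span_pair_iff hx hy c).1 (h2.2 c hcz)
    have key : x * (b - c₁ * z) ∈ TwoSidedIdeal.span ({y} : Set B) := by
      have : x * (b - c₁ * z) = u * y + y * (v * z) := by
        rw [mul_sub, ← huc, ← hcv]; noncomm_ring
      rw [this]
      exact TwoSidedIdeal.add_mem _
        ((mem_span_single_iff' hy _).2 ⟨u, rfl⟩)
        ((mem_span_single_iff hy _).2 ⟨v * z, rfl⟩)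
    have hb₁ : b - c₁ * z ∈ TwoSidedIdeal.span ({y, z} : Set B) :=
      hy_sub (hswap.1 _ key)
    have : b = (b - c₁ * z) + c₁ * z := by noncomm_ring
    rw [this]
    exact TwoSidedIdeal.add_mem _ hb₁ (TwoSidedIdeal.mul_mem_left _ _ _ hz_mem)
  · intro b hb
    obtain ⟨u, c, huc⟩ := (mem_span_pair_iff hy hz (b * x)).1 hb
    have hcz : z * c ∈ TwoSidedIdeal.span ({x, y} : Set B) := by
      have : z * c = b * x - y * u := by rw [← huc]; noncomm_ring
      rw [this]
      exact TwoSidedIdeal.sub_mem _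
        (TwoSidedIdeal.mul_mem_left _ _ _ (TwoSidedIdeal.subset_span (by left; rfl)))
        (TwoSidedIdeal.mul_mem_right _ _ _ (TwoSidedIdeal.subset_span (by right; rfl)))
    obtain ⟨c₁, v, hcv⟩ := (mem_span_pair_iff' hx hy c).1 (h2.1 c hcz)
    have key : (b - z * c₁) * x ∈ TwoSidedIdeal.span ({y} : Set B) := by
      have : (b - z * c₁) * x = y * u + (z * v) * y := by
        rw [sub_mul, ← huc, ← hcv]; noncomm_ring
      rw [this]
      exact TwoSidedIdeal.add_mem _
        ((mem_span_single_iff hy _).2 ⟨u, rfl⟩)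
        ((mem_span_single_iff' hy _).2 ⟨z * v, rfl⟩)
    have hb₁ : b - z * c₁ ∈ TwoSidedIdeal.span ({y, z} : Set B) :=
      hy_sub (hswap.2 _ key)
    have : b = (b - z * c₁) + z * c₁ := by noncomm_ring
    rw [this]
    exact TwoSidedIdeal.add_mem _ hb₁ (TwoSidedIdeal.mul_mem_right _ _ _ hz_mem)
end

section
/- Let R be a noetherian domain, σ an automorphism of R, and a a nonzero central element of R. Then the generalized Weyl algebra R(σ, a), generated over R by x and y subject to yx = a, xy = σ(a), xr = σ(r)x, and yr = σ^{-1}(r)y for all r ∈ R, is a domain. -/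
namespace GWA

variable (R : Type) [Ring R] (σ : R ≃+* R) (a : R)

/-- Generators of the generalized Weyl algebra: a copy of `R`
(via `Sum.inl`) together with `x = Sum.inr 0` and `y = Sum.inr 1`. -/
abbrev F := FreeAlgebra ℤ (R ⊕ Fin 2)

/-- The embedding of an element of `R` as a generator. -/
noncomputable def e (r : R) : F R := FreeAlgebra.ι ℤ (Sum.inl r)

noncomputable def X : F R := FreeAlgebra.ι ℤ (Sum.inr 0)

noncomputable def Y : F R := FreeAlgebra.ι ℤ (Sum.inr 1)

/-- The defining relations of the generalized Weyl algebra `R(σ, a)`: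
the copy of `R` is a subring, and `y x = a`, `x y = σ(a)`, `x r = σ(r) x`,
`y r = σ⁻¹(r) y` for all `r ∈ R`. -/
inductive Rel : F R → F R → Prop
  | add (r s : R) : Rel (e R r + e R s) (e R (r + s))
  | mul (r s : R) : Rel (e R r * e R s) (e R (r * s))
  | one : Rel (e R 1) 1
  | yx : Rel (Y R * X R) (e R a)
  | xy : Rel (X R * Y R) (e R (σ a))
  | xr (r : R) : Rel (X R * e R r) (e R (σ r) * X R)
  | yr (r : R) : Rel (Y R * e R r) (e R (σ.symm r) * Y R)

/-- The generalized Weyl algebra `R(σ, a)`. -/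
abbrev GeneralizedWeylAlgebra := RingQuot (Rel R σ a)

end GWA

/-! The generalized Weyl algebra acts on `ℤ →₀ R` by weighted shifts: `r` multiplies every
coefficient by `r`, `x` raises the degree by one and applies `σ`, `y` lowers it by one and applies
`q ↦ σ⁻¹(q) a`; centrality of `a` is what makes `y x = a` and `x y = σ(a)` hold. Every element is a
finite sum `∑ r_m v_m` with `v_m = x^m` for `m ≥ 0` and `v_m = y^(-m)` for `m < 0`, and `v_m` acts
as a shift by `m` whose weight is injective because `R` is a domain and `a ≠ 0`. Hence a nonzero
element acts as a sum of weighted shifts with injective top weight; comparing top-degree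
coefficients shows that it acts injectively, so a product of nonzero elements cannot vanish. -/

namespace Finsupp

variable {A : Type*} [AddCommGroup A]

noncomputable def weightedShift (k : ℤ) (φ : Module.End ℤ A) : Module.End ℤ (ℤ →₀ A) :=
  (Finsupp.domLCongr (Equiv.addRight k)).toLinearMap ∘ₗ mapRange.linearMap φ

@[simp]
lemma weightedShift_apply (k : ℤ) (φ : Module.End ℤ A) (w : ℤ →₀ A) (j : ℤ) :
    weightedShift k φ w j = φ (w (j - k)) :=
  rfl

lemma weightedShift_mul (k l : ℤ) (φ ψ : Module.End ℤ A) :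
    weightedShift k φ * weightedShift l ψ = weightedShift (k + l) (φ * ψ) := by
  ext w j
  simp [sub_sub]

lemma weightedShift_pow (k : ℤ) (φ : Module.End ℤ A) (n : ℕ) :
    weightedShift k φ ^ n = weightedShift (n * k) (φ ^ n) := by
  induction n with
  | zero => ext w j; simp
  | succ n ih => rw [pow_succ, ih, weightedShift_mul, pow_succ]; push_cast; ring_nf

lemma injective_sum_weightedShift (s : Finset ℤ) (hs : s.Nonempty) (φ : ℤ → Module.End ℤ A)
    (htop : Function.Injective (φ (s.max' hs))) :
    Function.Injective ⇑(∑ k ∈ s, weightedShift k (φ k)) := by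
  refine (injective_iff_map_eq_zero _).2 fun w hw => ?_
  by_contra hw0
  have hws : w.support.Nonempty := support_nonempty_iff.2 hw0
  set K := s.max' hs
  set N := w.support.max' hws
  have hlead : (∑ k ∈ s, weightedShift k (φ k)) w (N + K) = φ K (w N) := by
    rw [LinearMap.sum_apply, finsetSum_apply, Finset.sum_eq_single K]
    · simp
    · intro k hk hkK
      have : w (N + K - k) = 0 :=
        notMem_support_iff.1 fun h => by
          have := w.support.le_max' _ h
          have := s.le_max' k hk
          omega
      simp [this]
    · exact fun h => absurd (s.max'_mem hs) h
  have hN : w N ≠ 0 := mem_support_iff.1 (w.support.max'_mem hws)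
  rw [hw, zero_apply] at hlead
  exact hN (htop (by rw [← hlead, map_zero]))

end Finsupp

lemma isDomain_of_injective_of_ne_zero {A M : Type*} [Ring A] [AddCommGroup M] [Nontrivial M]
    (ρ : A →+* Module.End ℤ M) (hρ : ∀ u, u ≠ 0 → Function.Injective (ρ u)) : IsDomain A := by
  have : Nontrivial A := ρ.domain_nontrivial
  have : NoZeroDivisors A := ⟨fun {u v} huv => by
    by_contra! h
    obtain ⟨m, hm⟩ := exists_ne (0 : M)
    have hinj : Function.Injective (ρ (u * v)) := by
      rw [map_mul]; exact (hρ u h.1).comp (hρ v h.2)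
    exact hm (hinj (by simp [huv]))⟩
  exact NoZeroDivisors.to_isDomain A

namespace GWA

open Finsupp

variable {R : Type} [Ring R] {σ : R ≃+* R} {a : R}

noncomputable def ofBase : R →+* GeneralizedWeylAlgebra R σ a :=
  RingHom.mk'
    { toFun r := RingQuot.mkAlgHom ℤ _ (e R r)
      map_one' := by rw [← map_one (RingQuot.mkAlgHom ℤ _)]; exact RingQuot.mkAlgHom_rel ℤ Rel.one
      map_mul' r s := by
        rw [← map_mul]; exact (RingQuot.mkAlgHom_rel ℤ (Rel.mul r s)).symm }
    fun r s => by
      change _ = RingQuot.mkAlgHom ℤ _ (e R r) + RingQuot.mkAlgHom ℤ _ (e R s)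
      rw [← map_add]; exact (RingQuot.mkAlgHom_rel ℤ (Rel.add r s)).symm

lemma ofBase_apply (r : R) :
    (ofBase r : GeneralizedWeylAlgebra R σ a) = RingQuot.mkAlgHom ℤ _ (e R r) :=
  rfl

noncomputable def genX : GeneralizedWeylAlgebra R σ a := RingQuot.mkAlgHom ℤ _ (X R)

noncomputable def genY : GeneralizedWeylAlgebra R σ a := RingQuot.mkAlgHom ℤ _ (Y R)

lemma genY_mul_genX : (genY * genX : GeneralizedWeylAlgebra R σ a) = ofBase a := by
  rw [genY, genX, ← map_mul]
  exact RingQuot.mkAlgHom_rel ℤ Rel.yx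

lemma genX_mul_genY : (genX * genY : GeneralizedWeylAlgebra R σ a) = ofBase (σ a) := by
  rw [genY, genX, ← map_mul]
  exact RingQuot.mkAlgHom_rel ℤ Rel.xy

lemma genX_mul_ofBase (r : R) :
    (genX * ofBase r : GeneralizedWeylAlgebra R σ a) = ofBase (σ r) * genX := by
  rw [genX, ofBase_apply, ofBase_apply, ← map_mul, ← map_mul]
  exact RingQuot.mkAlgHom_rel ℤ (Rel.xr r)

lemma genY_mul_ofBase (r : R) :
    (genY * ofBase r : GeneralizedWeylAlgebra R σ a) = ofBase (σ.symm r) * genY := by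
  rw [genY, ofBase_apply, ofBase_apply, ← map_mul, ← map_mul]
  exact RingQuot.mkAlgHom_rel ℤ (Rel.yr r)

noncomputable def xyPow : ℤ → GeneralizedWeylAlgebra R σ a
  | (k : ℕ) => genX ^ k
  | Int.negSucc k => genY ^ (k + 1)

lemma xyPow_natCast (k : ℕ) : (xyPow k : GeneralizedWeylAlgebra R σ a) = genX ^ k := rfl

lemma xyPow_zero : (xyPow 0 : GeneralizedWeylAlgebra R σ a) = 1 := pow_zero _

lemma xyPow_neg_natCast (k : ℕ) : (xyPow (-k) : GeneralizedWeylAlgebra R σ a) = genY ^ k := by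
  cases k with
  | zero => simp [xyPow_zero]
  | succ k => rfl

lemma exists_genX_mul_xyPow (m : ℤ) :
    ∃ c : R, (genX * xyPow m : GeneralizedWeylAlgebra R σ a) = ofBase c * xyPow (m + 1) := by
  obtain ⟨k, rfl | rfl⟩ := Int.eq_nat_or_neg m
  · exact ⟨1, by rw [map_one, one_mul, ← Nat.cast_succ, xyPow_natCast, xyPow_natCast, pow_succ']⟩
  · cases k with
    | zero =>
      refine ⟨1, ?_⟩
      rw [map_one, one_mul, Nat.cast_zero, neg_zero, xyPow_zero, mul_one, zero_add]
      exact (pow_one _).symm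
    | succ k =>
      refine ⟨σ a, ?_⟩
      rw [show -((k + 1 : ℕ) : ℤ) + 1 = -k by push_cast; ring, xyPow_neg_natCast,
        xyPow_neg_natCast, pow_succ', ← mul_assoc, genX_mul_genY]

lemma exists_genY_mul_xyPow (m : ℤ) :
    ∃ c : R, (genY * xyPow m : GeneralizedWeylAlgebra R σ a) = ofBase c * xyPow (m - 1) := by
  obtain ⟨k, rfl | rfl⟩ := Int.eq_nat_or_neg m
  · cases k with
    | zero =>
      refine ⟨1, ?_⟩
      rw [map_one, one_mul, Nat.cast_zero, xyPow_zero, mul_one, zero_sub]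
      exact (pow_one _).symm
    | succ k =>
      refine ⟨a, ?_⟩
      rw [show ((k + 1 : ℕ) : ℤ) - 1 = k by push_cast; ring, xyPow_natCast, xyPow_natCast,
        pow_succ', ← mul_assoc, genY_mul_genX]
  · refine ⟨1, ?_⟩
    rw [map_one, one_mul, show -(k : ℤ) - 1 = -((k + 1 : ℕ) : ℤ) by push_cast; ring,
      xyPow_neg_natCast, xyPow_neg_natCast, pow_succ']

variable (σ a) in
noncomputable def ofFinsupp : (ℤ →₀ R) →+ GeneralizedWeylAlgebra R σ a :=
  liftAddHom fun m => (AddMonoidHom.mulRight (xyPow m)).comp ofBase.toAddMonoidHom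

lemma ofFinsupp_single (m : ℤ) (r : R) : ofFinsupp σ a (single m r) = ofBase r * xyPow m :=
  liftAddHom_apply_single _ _ _

lemma ofFinsupp_apply (f : ℤ →₀ R) :
    ofFinsupp σ a f = ∑ m ∈ f.support, ofBase (f m) * xyPow m :=
  liftAddHom_apply _ _

lemma mul_mem_range_ofFinsupp {g w : GeneralizedWeylAlgebra R σ a}
    (hg : ∀ m r, g * ofFinsupp σ a (single m r) ∈ (ofFinsupp σ a).range)
    (hw : w ∈ (ofFinsupp σ a).range) : g * w ∈ (ofFinsupp σ a).range := by
  obtain ⟨f, rfl⟩ := hw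
  induction f using Finsupp.induction_linear with
  | zero => simp
  | add f f' hf hf' => rw [map_add, mul_add]; exact add_mem hf hf'
  | single m r => exact hg m r

lemma mkAlgHom_ι_mul_ofFinsupp_single_mem_range (g : R ⊕ Fin 2) (m : ℤ) (r : R) :
    RingQuot.mkAlgHom ℤ (Rel R σ a) (FreeAlgebra.ι ℤ g) * ofFinsupp σ a (single m r) ∈
      (ofFinsupp σ a).range := by
  rw [ofFinsupp_single, ← mul_assoc]
  rcases g with s | i
  · exact ⟨single m (s * r), by rw [ofFinsupp_single, map_mul]; rfl⟩
  fin_cases i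
  · obtain ⟨c, hc⟩ := exists_genX_mul_xyPow (σ := σ) (a := a) m
    refine ⟨single (m + 1) (σ r * c), ?_⟩
    change _ = genX * ofBase r * xyPow m
    rw [ofFinsupp_single, genX_mul_ofBase, mul_assoc, hc, ← mul_assoc, map_mul]
  · obtain ⟨c, hc⟩ := exists_genY_mul_xyPow (σ := σ) (a := a) m
    refine ⟨single (m - 1) (σ.symm r * c), ?_⟩
    change _ = genY * ofBase r * xyPow m
    rw [ofFinsupp_single, genY_mul_ofBase, mul_assoc, hc, ← mul_assoc, map_mul]

lemma ofFinsupp_surjective : Function.Surjective (ofFinsupp σ a) := by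
  have hone : 1 ∈ (ofFinsupp σ a).range :=
    ⟨single 0 1, by rw [ofFinsupp_single, map_one, one_mul, xyPow_zero]⟩
  suffices h : ∀ v : F R, ∀ w ∈ (ofFinsupp σ a).range,
      RingQuot.mkAlgHom ℤ (Rel R σ a) v * w ∈ (ofFinsupp σ a).range from fun u => by
    obtain ⟨v, rfl⟩ := RingQuot.mkAlgHom_surjective ℤ (Rel R σ a) u
    exact AddMonoidHom.mem_range.1 (by simpa only [mul_one] using h v 1 hone)
  intro v
  induction v using FreeAlgebra.induction with
  | grade0 i => intro w hw; rw [AlgHom.commutes, ← Algebra.smul_def]; exact zsmul_mem hw i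
  | grade1 g => exact fun w => mul_mem_range_ofFinsupp (mkAlgHom_ι_mul_ofFinsupp_single_mem_range g)
  | mul v v' hv hv' => intro w hw; rw [map_mul, mul_assoc]; exact hv _ (hv' w hw)
  | add v v' hv hv' => intro w hw; rw [map_add, add_mul]; exact add_mem (hv w hw) (hv' w hw)

noncomputable def shiftGenerator (σ : R ≃+* R) (a : R) : R ⊕ Fin 2 → Module.End ℤ (ℤ →₀ R) :=
  Sum.elim (fun r => weightedShift 0 (LinearMap.mulLeft ℤ r))
    ![weightedShift 1 σ.toAddMonoidHom.toIntLinearMap,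
      weightedShift (-1) (LinearMap.mulRight ℤ a ∘ₗ σ.symm.toAddMonoidHom.toIntLinearMap)]

lemma lift_shiftGenerator_eq_of_rel (ha : a ∈ Set.center R) {u v : F R} (h : Rel R σ a u v) :
    FreeAlgebra.lift ℤ (shiftGenerator σ a) u = FreeAlgebra.lift ℤ (shiftGenerator σ a) v := by
  have hcomm (q : R) : q * a = a * q := ((Set.mem_center_iff.1 ha).comm q).eq.symm
  have hσcomm (q : R) : q * σ a = σ a * q := by
    simpa using congrArg σ (hcomm (σ.symm q))
  induction h <;> ext n q k <;> simp [shiftGenerator, e, X, Y, mul_assoc, add_mul]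
  · exact hcomm _
  · exact hσcomm _

variable (σ) in
noncomputable def shiftRep (ha : a ∈ Set.center R) :
    GeneralizedWeylAlgebra R σ a →ₐ[ℤ] Module.End ℤ (ℤ →₀ R) :=
  RingQuot.liftAlgHom ℤ ⟨FreeAlgebra.lift ℤ (shiftGenerator σ a),
    fun _ _ h => lift_shiftGenerator_eq_of_rel ha h⟩

section shiftRep

variable (ha : a ∈ Set.center R)

lemma shiftRep_ofBase (r : R) :
    shiftRep σ ha (ofBase r) = weightedShift 0 (LinearMap.mulLeft ℤ r) := by
  simp [shiftRep, ofBase_apply, e, shiftGenerator]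

lemma shiftRep_genX : shiftRep σ ha genX = weightedShift 1 σ.toAddMonoidHom.toIntLinearMap := by
  simp [shiftRep, genX, X, shiftGenerator]

lemma shiftRep_genY :
    shiftRep σ ha genY =
      weightedShift (-1) (LinearMap.mulRight ℤ a ∘ₗ σ.symm.toAddMonoidHom.toIntLinearMap) := by
  simp [shiftRep, genY, Y, shiftGenerator]

lemma exists_shiftRep_xyPow [IsDomain R] (ha0 : a ≠ 0) (m : ℤ) :
    ∃ φ : Module.End ℤ R, Function.Injective φ ∧ shiftRep σ ha (xyPow m) = weightedShift m φ := by
  obtain ⟨k, rfl | rfl⟩ := Int.eq_nat_or_neg m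
  · refine ⟨_, ?_, by rw [xyPow_natCast, map_pow, shiftRep_genX, weightedShift_pow, mul_one]⟩
    rw [Module.End.coe_pow]
    exact σ.injective.iterate k
  · refine ⟨_, ?_, by
      rw [xyPow_neg_natCast, map_pow, shiftRep_genY, weightedShift_pow, mul_neg_one]⟩
    rw [Module.End.coe_pow]
    exact ((mul_left_injective₀ ha0).comp σ.symm.injective).iterate k

lemma injective_shiftRep [IsDomain R] (ha0 : a ≠ 0) {u : GeneralizedWeylAlgebra R σ a}
    (hu : u ≠ 0) : Function.Injective (shiftRep σ ha u) := by
  choose φ hφ hxyPow using exists_shiftRep_xyPow ha ha0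
  obtain ⟨f, rfl⟩ := ofFinsupp_surjective u
  have hf : f.support.Nonempty := support_nonempty_iff.2 (by rintro rfl; exact hu (map_zero _))
  have hsum : shiftRep σ ha (ofFinsupp σ a f) =
      ∑ m ∈ f.support, weightedShift m (LinearMap.mulLeft ℤ (f m) * φ m) := by
    rw [ofFinsupp_apply, map_sum]
    refine Finset.sum_congr rfl fun m _ => ?_
    rw [map_mul, shiftRep_ofBase, hxyPow, weightedShift_mul, zero_add]
  rw [hsum]
  exact injective_sum_weightedShift _ hf _
    ((mul_right_injective₀ (mem_support_iff.1 (f.support.max'_mem hf))).comp (hφ _))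

end shiftRep

end GWA

theorem generalizedWeylAlgebra_isDomain_general (R : Type) [Ring R] [IsDomain R]
    (σ : R ≃+* R) (a : R) (ha : a ∈ Set.center R) (ha0 : a ≠ 0) :
    IsDomain (GWA.GeneralizedWeylAlgebra R σ a) :=
  isDomain_of_injective_of_ne_zero (GWA.shiftRep σ ha).toRingHom
    fun _ => GWA.injective_shiftRep ha ha0

/-- Let `R` be a noetherian domain, `σ` an automorphism of `R`, and `a` a nonzero
central element of `R`.  Then the generalized Weyl algebra `R(σ, a)` is a domain. -/
theorem generalizedWeylAlgebra_isDomain (R : Type) [Ring R] [IsDomain R]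
    [IsNoetherianRing R] [IsNoetherianRing Rᵐᵒᵖ]
    (σ : R ≃+* R) (a : R) (ha : a ∈ Set.center R) (ha0 : a ≠ 0) :
    IsDomain (GWA.GeneralizedWeylAlgebra R σ a) :=
  generalizedWeylAlgebra_isDomain_general R σ a ha ha0
end

section
/- In O_q(M_n(k)), the quantum Laplace relations hold: for all i, l, ∑_{j=1}^n (−q)^{j−l} X_{ij} [l̃ | j̃] = δ_{il} D_q, where [l̃|j̃] denotes the quantum minor with row set {1,…,n}∖{l} and column set {1,…,n}∖{j}, and D_q is the quantum determinant. -/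
/-!
Let `e_1, …, e_n` generate the quantum exterior algebra, `e_b e_a = -q e_a e_b` for `a < b`, and
encode an element `∑_T m_T e_T` of `O_q(M_n) ⊗ Λ_q` (with `e_T` the increasing monomial) by its
coefficient function `m`. Left multiplication by `z_i = ∑_a X_{ia} e_a` is `rowWedge i`. The
defining relations of `O_q(M_n)` are exactly what makes `z_i² = 0` and `z_j z_i = -q z_i z_j` for
`i < j`, while expanding along the first row shows that the `e_C`-coefficient of
`z_{r_1} ⋯ z_{r_s} · 1` is the quantum minor `[r|C]`. So `∑_j (-q)^j X_{ij} [l̃|j̃]` is the top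
coefficient of `z_i z_{l̃} · 1`. If `i ≠ l`, `z_i` occurs twice in this product and commuting the
first copy next to the second kills it; if `i = l`, commuting `z_i` past the `i` generators before
it costs `(-q)^i` and leaves `z_1 ⋯ z_n · 1`, whose top coefficient is `D_q`.
-/

namespace QMn

variable (k : Type) [Field k] (q : kˣ) (n : ℕ)

/-- The standard quantum matrix relations on generators `X (i,j)`. -/
inductive Rel : FreeAlgebra k (Fin n × Fin n) → FreeAlgebra k (Fin n × Fin n) → Prop
  | row {i j m : Fin n} (h : j < m) :
      Rel (FreeAlgebra.ι k (i, j) * FreeAlgebra.ι k (i, m))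
        ((q : k) • (FreeAlgebra.ι k (i, m) * FreeAlgebra.ι k (i, j)))
  | col {i l j : Fin n} (h : i < l) :
      Rel (FreeAlgebra.ι k (i, j) * FreeAlgebra.ι k (l, j))
        ((q : k) • (FreeAlgebra.ι k (l, j) * FreeAlgebra.ι k (i, j)))
  | anti {i l j m : Fin n} (h1 : i < l) (h2 : m < j) :
      Rel (FreeAlgebra.ι k (i, j) * FreeAlgebra.ι k (l, m))
        (FreeAlgebra.ι k (l, m) * FreeAlgebra.ι k (i, j))
  | diag {i l j m : Fin n} (h1 : i < l) (h2 : j < m) :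
      Rel (FreeAlgebra.ι k (i, j) * FreeAlgebra.ι k (l, m))
        (FreeAlgebra.ι k (l, m) * FreeAlgebra.ι k (i, j) +
          ((q : k) - ((q⁻¹ : kˣ) : k)) •
            (FreeAlgebra.ι k (i, m) * FreeAlgebra.ι k (l, j)))

/-- The quantum matrix algebra `O_q(M_n(k))`. -/
abbrev OqM := RingQuot (Rel k q n)

/-- The canonical generators `X_{ij}` of `O_q(M_n(k))`. -/
noncomputable def X (i j : Fin n) : OqM k q n :=
  RingQuot.mkAlgHom k (Rel k q n) (FreeAlgebra.ι k (i, j))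

/-- The length (number of inversions) of a permutation. -/
def permLen {n : ℕ} (π : Equiv.Perm (Fin n)) : ℕ :=
  ((Finset.univ : Finset (Fin n × Fin n)).filter
    fun p => p.1 < p.2 ∧ π p.2 < π p.1).card

/-- The quantum determinant of `O_q(M_n(k))`. -/
noncomputable def Dq : OqM k q n :=
  ∑ π : Equiv.Perm (Fin n),
    ((-(q : k)) ^ permLen π) • (List.ofFn fun i => X k q n i (π i)).prod

end QMn

/-- The quantum minor `[ĩ|j̃]` of `O_q(M_{n+1}(k))`, with row set the complement
of `{i}` and column set the complement of `{j}`. -/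
noncomputable def cminor (k : Type) [Field k] (q : kˣ) (n : ℕ) (i j : Fin (n + 1)) :
    QMn.OqM k q (n + 1) :=
  ∑ π : Equiv.Perm (Fin n),
    ((-(q : k)) ^ QMn.permLen π) •
      (List.ofFn fun t =>
        QMn.X k q (n + 1) (i.succAbove t) (j.succAbove (π t))).prod

theorem Finset.sum_sum_erase_eq_sum_sum_lt {α β : Type*} [LinearOrder α] [AddCommMonoid β]
    (T : Finset α) (f : α → α → β) :
    ∑ a ∈ T, ∑ b ∈ T.erase a, f a b = ∑ a ∈ T, ∑ b ∈ T with a < b, (f a b + f b a) := by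
  have hsplit : ∀ a, ∑ b ∈ T.erase a, f a b =
      ∑ b ∈ T with a < b, f a b + ∑ b ∈ T with b < a, f a b := by
    intro a
    rw [← Finset.sum_filter_add_sum_filter_not (T.erase a) (a < ·)]
    congr 2 <;> ext b <;> simp only [Finset.mem_filter, Finset.mem_erase] <;> grind
  rw [Finset.sum_congr rfl fun a _ => hsplit a, Finset.sum_add_distrib,
    Finset.sum_comm' (t := fun a => {b ∈ T | b < a}) (t' := T) (s' := fun b => {a ∈ T | b < a})
      (by simp only [Finset.mem_filter]; tauto)]
  simp only [Finset.sum_add_distrib]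

theorem List.mul_prod_eq_pow_smul_prod_mul {R A : Type*} [CommSemiring R] [Semiring A]
    [Algebra R A] {c : R} {x : A} {l : List A} (h : ∀ y ∈ l, x * y = c • (y * x)) :
    x * l.prod = c ^ l.length • (l.prod * x) := by
  induction l with
  | nil => simp
  | cons y l ih =>
    rw [List.prod_cons, ← mul_assoc, h y List.mem_cons_self, smul_mul_assoc, mul_assoc,
      ih fun z hz => h z (List.mem_cons_of_mem y hz), mul_smul_comm, smul_smul, ← pow_succ',
      List.length_cons, mul_assoc]

theorem List.ofFn_succAbove {n : ℕ} (i : Fin (n + 1)) :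
    List.ofFn i.succAbove =
      (List.finRange (n + 1)).take i ++ (List.finRange (n + 1)).drop (i + 1) := by
  refine List.ext_getElem (by simp; omega) fun t _ _ => ?_
  rw [List.getElem_ofFn, List.getElem_append]
  split_ifs with ht <;> simp only [List.length_take, List.length_finRange, lt_min_iff] at ht
  · simp [Fin.succAbove, Fin.lt_def, ht.1]
  · simp only [Fin.succAbove, Fin.lt_def, Fin.val_castSucc, List.getElem_drop,
      List.getElem_finRange]
    split_ifs <;> ext <;> simp <;> omega

namespace QMn

open Finset

variable {s : ℕ}

def consPerm (m₀ : Fin (s + 1)) (π : Equiv.Perm (Fin s)) : Equiv.Perm (Fin (s + 1)) :=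
  (finSuccEquiv s).trans (π.optionCongr.trans (finSuccEquiv' m₀).symm)

@[simp]
theorem consPerm_zero (m₀ : Fin (s + 1)) (π : Equiv.Perm (Fin s)) : consPerm m₀ π 0 = m₀ := by
  simp [consPerm]

@[simp]
theorem consPerm_succ (m₀ : Fin (s + 1)) (π : Equiv.Perm (Fin s)) (m : Fin s) :
    consPerm m₀ π m.succ = m₀.succAbove (π m) := by
  simp [consPerm]

theorem consPerm_bijective :
    Function.Bijective fun p : Fin (s + 1) × Equiv.Perm (Fin s) => consPerm p.1 p.2 := by
  rw [Fintype.bijective_iff_injective_and_card]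
  refine ⟨fun ⟨m₁, π₁⟩ ⟨m₂, π₂⟩ h => ?_, by simp [Fintype.card_perm, Nat.factorial_succ]⟩
  have hm : m₁ = m₂ := by simpa using congr($h 0)
  subst hm
  have hπ : π₁ = π₂ := Equiv.ext fun m => by simpa using congr($h m.succ)
  rw [hπ]

theorem permLen_eq_sum (σ : Equiv.Perm (Fin s)) :
    permLen σ = ∑ a, ∑ b, if a < b ∧ σ b < σ a then 1 else 0 := by
  rw [permLen, card_filter, ← univ_product_univ, sum_product]

theorem permLen_consPerm (m₀ : Fin (s + 1)) (π : Equiv.Perm (Fin s)) :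
    permLen (consPerm m₀ π) = m₀ + permLen π := by
  simp only [permLen_eq_sum, Fin.sum_univ_succ, consPerm_zero, consPerm_succ,
    Fin.succAbove_lt_succAbove_iff, Fin.succAbove_lt_iff_castSucc_lt, Fin.succ_lt_succ_iff,
    Fin.not_lt_zero, false_and, if_false, zero_add, Fin.succ_pos, true_and,
    Nat.add_left_inj]
  rw [Equiv.sum_comp π fun y => if y.castSucc < m₀ then 1 else 0, ← card_filter]
  simp only [Fin.lt_def, Fin.val_castSucc, Fin.card_filter_val_lt]
  omega

variable (k : Type) [Field k] (q : kˣ) {n : ℕ}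

noncomputable def qMinor (r c : Fin s → Fin n) : OqM k q n :=
  ∑ π : Equiv.Perm (Fin s),
    (-(q : k)) ^ permLen π • (List.ofFn fun m => X k q n (r m) (c (π m))).prod

theorem qMinor_succ (r c : Fin (s + 1) → Fin n) :
    qMinor k q r c = ∑ m₀ : Fin (s + 1), (-(q : k)) ^ (m₀ : ℕ) •
      (X k q n (r 0) (c m₀) * qMinor k q (Fin.tail r) (c ∘ m₀.succAbove)) := by
  simp only [qMinor, mul_sum, smul_sum, mul_smul_comm, smul_smul, ← pow_add]
  rw [← sum_product', univ_product_univ]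
  refine (Fintype.sum_bijective _ consPerm_bijective _ _ fun p => ?_).symm
  simp [permLen_consPerm, List.ofFn_succ, Fin.tail]

variable {k q}

theorem X_mul_X_row {i a b : Fin n} (h : a < b) :
    X k q n i a * X k q n i b = (q : k) • (X k q n i b * X k q n i a) := by
  simpa [X] using RingQuot.mkAlgHom_rel k (Rel.row (k := k) (q := q) (i := i) h)

theorem X_mul_X_anti {i j a b : Fin n} (hij : i < j) (hab : a < b) :
    X k q n i b * X k q n j a = X k q n j a * X k q n i b := by
  simpa [X] using RingQuot.mkAlgHom_rel k (Rel.anti (k := k) (q := q) hij hab)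

theorem X_mul_X_diag {i j a b : Fin n} (hij : i < j) (hab : a < b) :
    X k q n i a * X k q n j b =
      X k q n j b * X k q n i a + ((q : k) - ((q⁻¹ : kˣ) : k)) • (X k q n i b * X k q n j a) := by
  simpa [X] using RingQuot.mkAlgHom_rel k (Rel.diag (k := k) (q := q) hij hab)

variable (k q) in
noncomputable def minor₂ (i j a b : Fin n) : OqM k q n :=
  X k q n i a * X k q n j b + (-(q : k)) • (X k q n i b * X k q n j a)

theorem minor₂_self {i a b : Fin n} (hab : a < b) : minor₂ k q i i a b = 0 := by
  rw [minor₂, X_mul_X_row hab]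
  module

theorem minor₂_swap {i j a b : Fin n} (hij : i < j) (hab : a < b) :
    minor₂ k q j i a b = (-(q : k)) • minor₂ k q i j a b := by
  have hq : (q : k) * ((q⁻¹ : kˣ) : k) = 1 := Units.mul_inv q
  rw [minor₂, minor₂, X_mul_X_diag hij hab, X_mul_X_anti hij hab]
  linear_combination (norm := module) (-hq) • (X k q n j a * X k q n i b)

variable (k q n) in
abbrev QExt := Finset (Fin n) → OqM k q n

noncomputable def vacuum : QExt k q n := Pi.single ∅ 1

noncomputable def rowWedge (i : Fin n) : Module.End k (QExt k q n) where
  toFun m T := ∑ a ∈ T, (-(q : k)) ^ #{t ∈ T | t < a} • (X k q n i a * m (T.erase a))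
  map_add' m m' := by
    ext T
    simp only [Pi.add_apply, mul_add, smul_add, sum_add_distrib]
  map_smul' c m := by
    ext T
    simp only [Pi.smul_apply, mul_smul_comm, smul_sum, RingHom.id_apply, smul_comm c]

theorem rowWedge_apply (i : Fin n) (m : QExt k q n) (T : Finset (Fin n)) :
    rowWedge i m T = ∑ a ∈ T, (-(q : k)) ^ #{t ∈ T | t < a} • (X k q n i a * m (T.erase a)) :=
  rfl

theorem rowWedge_mul_rowWedge_apply (i j : Fin n) (m : QExt k q n) (T : Finset (Fin n)) :
    (rowWedge i * rowWedge j : Module.End k (QExt k q n)) m T = ∑ a ∈ T, ∑ b ∈ T with a < b,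
      (-(q : k)) ^ (#{t ∈ T | t < a} + #{t ∈ T.erase a | t < b}) •
        (minor₂ k q i j a b * m ((T.erase a).erase b)) := by
  simp only [Module.End.mul_apply, rowWedge_apply, mul_sum, smul_sum, mul_smul_comm, smul_smul,
    ← pow_add]
  rw [sum_sum_erase_eq_sum_sum_lt]
  refine sum_congr rfl fun a ha => sum_congr rfl fun b hb => ?_
  have hab : a < b := (mem_filter.mp hb).2
  have hb_erase : #{t ∈ T | t < b} = #{t ∈ T.erase a | t < b} + 1 := by
    rw [filter_erase, card_erase_add_one (mem_filter.mpr ⟨ha, hab⟩)]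
  have ha_erase : #{t ∈ T.erase b | t < a} = #{t ∈ T | t < a} := by
    rw [filter_erase, erase_eq_of_notMem fun h => (mem_filter.mp h).2.asymm hab]
  rw [hb_erase, ha_erase, erase_right_comm (a := b), minor₂]
  simp only [add_mul, smul_mul_assoc, mul_assoc]
  module

theorem rowWedge_mul_self (i : Fin n) : rowWedge (k := k) (q := q) i * rowWedge i = 0 := by
  refine LinearMap.ext fun m => funext fun T => ?_
  simp only [rowWedge_mul_rowWedge_apply, LinearMap.zero_apply, Pi.zero_apply]
  exact sum_eq_zero fun a _ => sum_eq_zero fun b hb => by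
    rw [minor₂_self (mem_filter.mp hb).2, zero_mul, smul_zero]

theorem rowWedge_mul_rowWedge_of_lt {i j : Fin n} (hij : i < j) :
    rowWedge (k := k) (q := q) j * rowWedge i = (-(q : k)) • (rowWedge i * rowWedge j) := by
  refine LinearMap.ext fun m => funext fun T => ?_
  simp only [LinearMap.smul_apply, Pi.smul_apply, rowWedge_mul_rowWedge_apply, smul_sum]
  refine sum_congr rfl fun a _ => sum_congr rfl fun b hb => ?_
  rw [minor₂_swap hij (mem_filter.mp hb).2, smul_mul_assoc, smul_comm]

noncomputable def wedgeProd (ts : List (Fin n)) : Module.End k (QExt k q n) :=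
  (ts.map rowWedge).prod

theorem wedgeProd_ofFn_vacuum_image (r c : Fin s → Fin n) (hc : StrictMono c) :
    wedgeProd (List.ofFn r) (vacuum (k := k) (q := q)) (univ.image c) = qMinor k q r c := by
  induction s with
  | zero => simp [wedgeProd, vacuum, qMinor, permLen]
  | succ s ih =>
    rw [List.ofFn_succ, wedgeProd, List.map_cons, List.prod_cons, Module.End.mul_apply,
      rowWedge_apply, sum_image hc.injective.injOn, qMinor_succ]
    refine sum_congr rfl fun m₀ _ => ?_
    have hcard : #{t ∈ univ.image c | t < c m₀} = m₀ := by
      rw [filter_image, card_image_of_injective _ hc.injective]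
      simp only [hc.lt_iff_lt, filter_gt_eq_Iio, Fin.card_Iio]
    have herase : (univ.image c).erase (c m₀) = univ.image (c ∘ m₀.succAbove) := by
      rw [← image_erase hc.injective, ← compl_singleton, ← Fin.image_succAbove_univ, image_image]
    rw [hcard, herase, ← ih _ _ (hc.comp (Fin.strictMono_succAbove m₀))]
    rfl

theorem wedgeProd_append (A B : List (Fin n)) :
    wedgeProd (k := k) (q := q) (A ++ B) = wedgeProd A * wedgeProd B := by
  rw [wedgeProd, List.map_append, List.prod_append, wedgeProd, wedgeProd]

theorem wedgeProd_cons (i : Fin n) (A : List (Fin n)) :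
    wedgeProd (k := k) (q := q) (i :: A) = rowWedge i * wedgeProd A := by
  rw [wedgeProd, List.map_cons, List.prod_cons, wedgeProd]

theorem rowWedge_mul_wedgeProd_append {i : Fin n} {A : List (Fin n)} (hA : ∀ t ∈ A, t < i)
    (B : List (Fin n)) :
    rowWedge (k := k) (q := q) i * wedgeProd (A ++ B) =
      (-(q : k)) ^ A.length • wedgeProd (A ++ i :: B) := by
  have hcomm : rowWedge (k := k) (q := q) i * wedgeProd A =
      (-(q : k)) ^ A.length • (wedgeProd A * rowWedge i) := by
    rw [wedgeProd, ← List.length_map (f := rowWedge (k := k) (q := q))]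
    refine List.mul_prod_eq_pow_smul_prod_mul fun y hy => ?_
    obtain ⟨t, ht, rfl⟩ := List.mem_map.mp hy
    exact rowWedge_mul_rowWedge_of_lt (hA t ht)
  rw [wedgeProd_append, ← mul_assoc, hcomm, smul_mul_assoc, mul_assoc, wedgeProd_append,
    wedgeProd_cons]

theorem wedgeProd_append_cons_cons_self (A B : List (Fin n)) (i : Fin n) :
    wedgeProd (k := k) (q := q) (A ++ i :: i :: B) = 0 := by
  rw [wedgeProd_append, wedgeProd_cons, wedgeProd_cons, ← mul_assoc (rowWedge i),
    rowWedge_mul_self, zero_mul, mul_zero]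

theorem rowWedge_mul_wedgeProd_eq_zero {ts : List (Fin n)} (hts : ts.Pairwise (· < ·))
    {i : Fin n} (hi : i ∈ ts) : rowWedge (k := k) (q := q) i * wedgeProd ts = 0 := by
  obtain ⟨A, B, rfl⟩ := List.append_of_mem hi
  have hA : ∀ t ∈ A, t < i := fun t ht =>
    (List.pairwise_append.mp hts).2.2 t ht i List.mem_cons_self
  rw [rowWedge_mul_wedgeProd_append hA, wedgeProd_append_cons_cons_self, smul_zero]

theorem rowWedge_mul_wedgeProd_ofFn_succAbove (i l : Fin (n + 1)) :
    rowWedge (k := k) (q := q) i * wedgeProd (List.ofFn l.succAbove) =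
      if i = l then (-(q : k)) ^ (i : ℕ) • wedgeProd (List.finRange (n + 1)) else 0 := by
  split_ifs with hil
  · subst hil
    set L := List.finRange (n + 1)
    have hL : L = L.take i ++ i :: L.drop (i + 1) := by
      have hi : (i : ℕ) < L.length := by simpa [L] using i.is_lt
      conv_lhs => rw [← List.take_append_drop i L]
      rw [← List.getElem_cons_drop hi, List.getElem_finRange, Fin.cast_mk]
    have hsorted : L.Pairwise (· < ·) := List.pairwise_lt_finRange (n + 1)
    rw [hL] at hsorted
    have hA : ∀ t ∈ L.take i, t < i := fun t ht =>
      (List.pairwise_append.mp hsorted).2.2 t ht i List.mem_cons_self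
    rw [List.ofFn_succAbove, rowWedge_mul_wedgeProd_append hA, ← hL, List.length_take,
      List.length_finRange, min_eq_left i.is_lt.le]
  · have hsorted : (List.ofFn l.succAbove).Pairwise (· < ·) :=
      List.pairwise_ofFn.mpr fun _ _ h => Fin.strictMono_succAbove l h
    exact rowWedge_mul_wedgeProd_eq_zero hsorted
      (List.mem_ofFn.mpr (Fin.exists_succAbove_eq hil))

theorem sum_neg_pow_smul_X_mul_cminor (i l : Fin (n + 1)) :
    ∑ j : Fin (n + 1), (-(q : k)) ^ (j : ℕ) • (X k q (n + 1) i j * cminor k q n l j) =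
      (rowWedge i * wedgeProd (List.ofFn l.succAbove) : Module.End k (QExt k q (n + 1)))
        vacuum univ := by
  rw [Module.End.mul_apply, rowWedge_apply]
  refine sum_congr rfl fun j _ => ?_
  rw [filter_gt_eq_Iio, Fin.card_Iio, ← compl_singleton, ← Fin.image_succAbove_univ,
    wedgeProd_ofFn_vacuum_image _ _ (Fin.strictMono_succAbove j)]
  rfl

theorem wedgeProd_finRange_vacuum_univ :
    wedgeProd (List.finRange n) (vacuum (k := k) (q := q)) univ = Dq k q n := by
  rw [← List.ofFn_id, ← image_id (s := univ), wedgeProd_ofFn_vacuum_image _ _ strictMono_id]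
  rfl

end QMn

/-- The quantum Laplace relations in `O_q(M_n(k))`: for all `i, l`,
`∑_j (−q)^{j−l} X_{ij} [l̃|j̃] = δ_{il} D_q`. -/
theorem quantum_laplace (k : Type) [Field k] (q : kˣ) (n : ℕ) (i l : Fin (n + 1)) :
    ∑ j : Fin (n + 1),
        ((((-q) ^ ((j : ℤ) - (l : ℤ)) : kˣ) : k) •
          (QMn.X k q (n + 1) i j * cminor k q n l j)) =
      if i = l then QMn.Dq k q (n + 1) else 0 := by
  have hcoef (j : ℕ) : (((-q) ^ ((j : ℤ) - (l : ℤ)) : kˣ) : k) =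
      ((((-q) ^ (l : ℕ))⁻¹ : kˣ) : k) * (-(q : k)) ^ j := by
    rw [zpow_sub, zpow_natCast, zpow_natCast, mul_comm, Units.val_mul, Units.val_pow_eq_pow_val,
      Units.val_neg]
  have hlaplace := QMn.sum_neg_pow_smul_X_mul_cminor (k := k) (q := q) i l
  rw [QMn.rowWedge_mul_wedgeProd_ofFn_succAbove] at hlaplace
  simp_rw [hcoef, mul_smul, ← Finset.smul_sum, hlaplace]
  split_ifs with hil
  · subst hil
    have hinv : ((((-q) ^ (i : ℕ))⁻¹ : kˣ) : k) * (-(q : k)) ^ (i : ℕ) = 1 := by simp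
    rw [LinearMap.smul_apply, Pi.smul_apply, QMn.wedgeProd_finRange_vacuum_univ, smul_smul, hinv,
      one_smul]
  · rw [LinearMap.zero_apply, Pi.zero_apply, smul_zero]
end

section
/- Let k be a field, q ∈ k× not a root of unity, and let a be an H-eigenvector in O_q(M_n(k)) for the standard action of the torus H = (k×)^{2n}. Then under the Levasseur–Stafford isomorphism ξ: O_q(GL_n(k)) → O_q(SL_n(k))[z^{±1}], we have ξ(a) = z^r π(a) for some integer r ≥ 0, where π is the quotient map to O_q(SL_n(k)); in particular ξ(a) is a unit multiple of π(a). -/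
namespace QGL

variable (k : Type) [Field k] (q : kˣ) (n : ℕ)

/-- The quantum determinant as an element of the free algebra. -/
noncomputable def Dfree : FreeAlgebra k (Fin n × Fin n) :=
  ∑ π : Equiv.Perm (Fin n),
    ((-(q : k)) ^ QMn.permLen π) •
      (List.ofFn fun i => FreeAlgebra.ι k (i, π i)).prod

/-- Relations of `O_q(SL_n(k))`: the quantum matrix relations together with
`D_q = 1`. -/
inductive SLRel : FreeAlgebra k (Fin n × Fin n) → FreeAlgebra k (Fin n × Fin n) → Prop
  | base {x y : FreeAlgebra k (Fin n × Fin n)} : QMn.Rel k q n x y → SLRel x y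
  | det : SLRel (Dfree k q n) 1

/-- The quantum special linear group `O_q(SL_n(k)) = O_q(M_n(k))/⟨D_q − 1⟩`. -/
abbrev OqSL := RingQuot (SLRel k q n)

/-- The generators `x_{ij}` of `O_q(SL_n(k))`. -/
noncomputable def xSL (i j : Fin n) : OqSL k q n :=
  RingQuot.mkAlgHom k (SLRel k q n) (FreeAlgebra.ι k (i, j))

/-- Embedding of the free algebra on the `X_{ij}` into the free algebra with an
additional generator `E` (the inverse of the determinant). -/
noncomputable def emb : FreeAlgebra k (Fin n × Fin n) →ₐ[k]
    FreeAlgebra k ((Fin n × Fin n) ⊕ Unit) :=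
  FreeAlgebra.lift k fun p => FreeAlgebra.ι k (Sum.inl p)

/-- Relations of `O_q(GL_n(k)) = O_q(M_n(k))[D_q^{-1}]`: the quantum matrix
relations together with an inverse `E` for the quantum determinant. -/
inductive GLRel : FreeAlgebra k ((Fin n × Fin n) ⊕ Unit) →
    FreeAlgebra k ((Fin n × Fin n) ⊕ Unit) → Prop
  | base {x y : FreeAlgebra k (Fin n × Fin n)} :
      QMn.Rel k q n x y → GLRel (emb k n x) (emb k n y)
  | inv : GLRel (FreeAlgebra.ι k (Sum.inr ()) * emb k n (Dfree k q n)) 1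
  | inv' : GLRel (emb k n (Dfree k q n) * FreeAlgebra.ι k (Sum.inr ())) 1

/-- The quantum general linear group `O_q(GL_n(k))`. -/
abbrev OqGL := RingQuot (GLRel k q n)

/-- The generators `X_{ij}` of `O_q(GL_n(k))`. -/
noncomputable def XGL (i j : Fin n) : OqGL k q n :=
  RingQuot.mkAlgHom k (GLRel k q n) (FreeAlgebra.ι k (Sum.inl (i, j)))

end QGL

/-!
Scaling the first row of generators by `t ∈ kˣ` is an element of the torus `H`, and under `Ψ`
it becomes the substitution `T ↦ t T`, since `Ψ` attaches exactly one factor `T` to each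
first-row generator. Hence `Ψ a` is an eigenvector of `T ↦ q T`, which acts on the coefficient
of `T ^ m` by `q ^ m`. As `q` is not a root of unity these scalars are pairwise distinct, so
`Ψ a = C b * T m` is a monomial. Evaluating at `T = 1` recovers `π`, so `b = π a`; and `m ≥ 0`
(unless `b = 0`) because `Ψ` only involves nonnegative powers of `T`.
-/

namespace QMn

variable (k : Type) [Field k] (q : kˣ) (n : ℕ)

theorem adjoin_X_eq_top :
    Algebra.adjoin k (Set.range fun p : Fin n × Fin n => X k q n p.1 p.2) = ⊤ := by
  have hX : (Set.range fun p : Fin n × Fin n => X k q n p.1 p.2) =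
      RingQuot.mkAlgHom k (Rel k q n) '' Set.range (FreeAlgebra.ι k) := by
    rw [← Set.range_comp]; rfl
  rw [hX, Algebra.adjoin_image, FreeAlgebra.adjoin_range_ι, Algebra.map_top,
    AlgHom.range_eq_top]
  exact RingQuot.mkAlgHom_surjective k _

variable {k q n}

theorem algHom_ext {B : Type*} [Semiring B] [Algebra k B] {f g : OqM k q n →ₐ[k] B}
    (h : ∀ i j, f (X k q n i j) = g (X k q n i j)) : f = g :=
  AlgHom.ext_of_adjoin_eq_top (adjoin_X_eq_top k q n) <| by
    rintro _ ⟨⟨i, j⟩, rfl⟩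
    exact h i j

theorem map_mem_of_forall_X_mem {B : Type*} [Semiring B] [Algebra k B]
    (f : OqM k q n →ₐ[k] B) (S : Subalgebra k B) (h : ∀ i j, f (X k q n i j) ∈ S)
    (b : OqM k q n) : f b ∈ S := by
  have hb : b ∈ Algebra.adjoin k (Set.range fun p : Fin n × Fin n => X k q n p.1 p.2) := by
    rw [adjoin_X_eq_top]; trivial
  exact (Algebra.adjoin_le (S := S.comap f) (by rintro _ ⟨⟨i, j⟩, rfl⟩; exact h i j)) hb

variable (α β : Fin n → kˣ)

noncomputable def torusFree :
    FreeAlgebra k (Fin n × Fin n) →ₐ[k] FreeAlgebra k (Fin n × Fin n) :=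
  FreeAlgebra.lift k fun p => ((α p.1 * β p.2 : kˣ) : k) • FreeAlgebra.ι k p

theorem Rel.torusFree_eq_smul {x y : FreeAlgebra k (Fin n × Fin n)} (h : Rel k q n x y) :
    ∃ c : k, torusFree α β x = c • x ∧ torusFree α β y = c • y := by
  cases h
  case' row i j m _ => refine ⟨α i * β j * (α i * β m), ?_, ?_⟩
  case' col i l j _ => refine ⟨α i * β j * (α l * β j), ?_, ?_⟩
  case' anti i l j m _ _ => refine ⟨α i * β j * (α l * β m), ?_, ?_⟩
  case' diag i l j m _ _ => refine ⟨α i * β j * (α l * β m), ?_, ?_⟩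
  all_goals
    simp only [torusFree, map_add, map_smul, map_mul, FreeAlgebra.lift_ι_apply, Units.val_mul,
      Algebra.mul_smul_comm, Algebra.smul_mul_assoc, smul_add]
    module

noncomputable def torusAct : OqM k q n →ₐ[k] OqM k q n :=
  RingQuot.liftAlgHom k ⟨(RingQuot.mkAlgHom k (Rel k q n)).comp (torusFree α β), fun _ _ h => by
    obtain ⟨c, hx, hy⟩ := h.torusFree_eq_smul α β
    simp only [AlgHom.comp_apply, hx, hy, map_smul, RingQuot.mkAlgHom_rel k h]⟩

@[simp]
theorem torusAct_X (i j : Fin n) :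
    torusAct α β (X k q n i j) = ((α i * β j : kˣ) : k) • X k q n i j := by
  simp [torusAct, X, torusFree]

end QMn

namespace LaurentPolynomial

section CommSemiring

variable {k A : Type*} [CommSemiring k] [Semiring A] [Algebra k A]

noncomputable def scaleT (t : kˣ) : A[T;T⁻¹] →ₐ[k] A[T;T⁻¹] :=
  AddMonoidAlgebra.liftNCAlgHom AddMonoidAlgebra.singleZeroAlgHom
    { toFun m := ((t ^ m.toAdd : kˣ) : k) • T m.toAdd
      map_one' := by simp
      map_mul' x y := by
        simp only [toAdd_mul, zpow_add, Units.val_mul, T_add, smul_mul_smul_comm] }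
    fun a m => ((commute_T _ _).symm.smul_right _)

theorem scaleT_C_mul_T (t : kˣ) (a : A) (m : ℤ) :
    scaleT t (C a * T m) = ((t ^ m : kˣ) : k) • (C a * T m) := by
  rw [← single_eq_C_mul_T]
  exact (AddMonoidAlgebra.liftNC_single _ _ _ _).trans
    ((mul_smul_comm _ _ _).trans (congrArg _ (single_eq_C_mul_T a m).symm))

theorem coeff_C_mul_T (a : A) (m m' : ℤ) :
    (C a * T m).coeff m' = if m = m' then a else 0 := by
  rw [← single_eq_C_mul_T, AddMonoidAlgebra.coeff_single, Finsupp.single_apply]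

theorem coeff_scaleT (t : kˣ) (F : A[T;T⁻¹]) (m : ℤ) :
    (scaleT t F).coeff m = ((t ^ m : kˣ) : k) • F.coeff m := by
  induction F using LaurentPolynomial.induction_on' with
  | add F G hF hG => simp [hF, hG]
  | C_mul_T m' a =>
    rw [scaleT_C_mul_T, AddMonoidAlgebra.coeff_smul_apply, coeff_C_mul_T]
    split_ifs with h <;> simp [h]

noncomputable def evalOne : A[T;T⁻¹] →ₐ[k] A :=
  AddMonoidAlgebra.liftNCAlgHom (AlgHom.id k A) 1 fun _ _ => Commute.one_right _

@[simp]
theorem evalOne_C_mul_T (a : A) (m : ℤ) : evalOne (k := k) (C a * T m) = a := by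
  rw [← single_eq_C_mul_T]
  simp [evalOne, -single_eq_C_mul_T]

variable (k A) in
noncomputable def nonnegSubalgebra : Subalgebra k A[T;T⁻¹] where
  carrier := {F | ∀ m < 0, F.coeff m = 0}
  add_mem' {F G} hF hG m hm := by simp [hF m hm, hG m hm]
  mul_mem' {F G} hF hG m hm := by
    classical
    rw [AddMonoidAlgebra.coeff_mul]
    refine Finset.sum_eq_zero fun m₁ hm₁ => Finset.sum_eq_zero fun m₂ hm₂ =>
      if_neg fun h => ?_
    rcases lt_or_ge m₁ 0 with h₁ | h₁
    · exact Finsupp.mem_support_iff.mp hm₁ (hF m₁ h₁)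
    rcases lt_or_ge m₂ 0 with h₂ | h₂
    · exact Finsupp.mem_support_iff.mp hm₂ (hG m₂ h₂)
    omega
  algebraMap_mem' r m hm := by
    rw [← mul_one (algebraMap k A[T;T⁻¹] r), ← T_zero, algebraMap_apply, coeff_C_mul_T,
      if_neg hm.ne']

theorem C_mul_T_mem_nonnegSubalgebra (a : A) {m : ℤ} (hm : 0 ≤ m) :
    C a * T m ∈ nonnegSubalgebra k A := fun m' hm' => by
  rw [coeff_C_mul_T, if_neg (by omega)]

theorem exists_nat_of_C_mul_T_mem_nonnegSubalgebra {a : A} {m : ℤ}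
    (h : C a * T m ∈ nonnegSubalgebra k A) : ∃ r : ℕ, C a * T m = C a * T r := by
  rcases lt_or_ge m 0 with hm | hm
  · have ha : a = 0 := by simpa [coeff_C_mul_T] using h m hm
    exact ⟨0, by simp [ha]⟩
  · exact ⟨m.toNat, by rw [Int.toNat_of_nonneg hm]⟩

end CommSemiring

section Field

variable {k A : Type*} [Field k] [Ring A] [Algebra k A]

theorem exists_eq_C_mul_T_of_scaleT_eq_smul {t : kˣ} (ht : ¬IsOfFinOrder t) {F : A[T;T⁻¹]}
    {c : k} (hF : scaleT t F = c • F) : ∃ m b, F = C b * T m := by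
  have hc : ∀ m, F.coeff m ≠ 0 → ((t ^ m : kˣ) : k) = c := fun m hm =>
    smul_left_injective k hm <| by
      simpa only [coeff_scaleT, AddMonoidAlgebra.coeff_smul_apply] using congrArg (·.coeff m) hF
  obtain ⟨m, hm⟩ : ∃ m, ∀ m', F.coeff m' ≠ 0 → m' = m := by
    by_cases h : ∃ m, F.coeff m ≠ 0
    · obtain ⟨m, hm⟩ := h
      exact ⟨m, fun m' hm' => injective_zpow_iff_not_isOfFinOrder.2 ht
        (Units.ext ((hc m' hm').trans (hc m hm).symm))⟩
    · push Not at h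
      exact ⟨0, fun m' hm' => absurd (h m') hm'⟩
  refine ⟨m, F.coeff m, LaurentPolynomial.ext fun m' => ?_⟩
  rw [coeff_C_mul_T]
  split_ifs with h
  · rw [h]
  · by_contra hm'
    exact h (hm m' hm').symm

end Field

end LaurentPolynomial

open LaurentPolynomial in
theorem eigenvector_image_is_unit_multiple_general (k : Type) [Field k] (q : kˣ)
    (hq : ∀ m : ℕ, 0 < m → (q : k) ^ m ≠ 1) (n : ℕ)
    (a : QMn.OqM k q (n + 1))
    (heig : ∀ (α β : Fin (n + 1) → kˣ) (φ : QMn.OqM k q (n + 1) →ₐ[k] QMn.OqM k q (n + 1)),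
      (∀ i j : Fin (n + 1),
          φ (QMn.X k q (n + 1) i j) = ((α i * β j : kˣ) : k) • QMn.X k q (n + 1) i j) →
      ∃ c : kˣ, φ a = (c : k) • a)
    (π : QMn.OqM k q (n + 1) →ₐ[k] QGL.OqSL k q (n + 1))
    (hπ : ∀ i j : Fin (n + 1), π (QMn.X k q (n + 1) i j) = QGL.xSL k q (n + 1) i j)
    (Ψ : QMn.OqM k q (n + 1) →ₐ[k] LaurentPolynomial (QGL.OqSL k q (n + 1)))
    (hΨ1 : ∀ j : Fin (n + 1),
      Ψ (QMn.X k q (n + 1) 0 j) = C (QGL.xSL k q (n + 1) 0 j) * T 1)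
    (hΨ2 : ∀ i j : Fin (n + 1), i ≠ 0 →
      Ψ (QMn.X k q (n + 1) i j) = C (QGL.xSL k q (n + 1) i j)) :
    ∃ r : ℕ, Ψ a = C (π a) * T r := by
  have hΨ : ∀ i j, Ψ (QMn.X k q (n + 1) i j) =
      C (QGL.xSL k q (n + 1) i j) * T (if i = 0 then 1 else 0) := by
    intro i j
    split_ifs with hi
    · rw [hi, hΨ1]
    · rw [hΨ2 i j hi, T_zero, mul_one]
  have hq_order : ¬IsOfFinOrder q := fun h => by
    obtain ⟨m, hm, hqm⟩ := isOfFinOrder_iff_pow_eq_one.1 h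
    exact hq m hm (by rw [← Units.val_pow_eq_pow_val, hqm, Units.val_one])
  have hscale : (scaleT q).comp Ψ = Ψ.comp (QMn.torusAct (Pi.mulSingle 0 q) 1) := by
    refine QMn.algHom_ext fun i j => ?_
    simp only [AlgHom.comp_apply, QMn.torusAct_X, map_smul, hΨ, scaleT_C_mul_T]
    split_ifs with hi <;> simp [hi]
  obtain ⟨c, hc⟩ := heig _ _ _ (QMn.torusAct_X (Pi.mulSingle 0 q) 1)
  obtain ⟨m, b, hm⟩ := exists_eq_C_mul_T_of_scaleT_eq_smul hq_order (F := Ψ a) (c := c) (by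
    rw [← map_smul, ← hc, ← AlgHom.comp_apply, hscale, AlgHom.comp_apply])
  have hev : (evalOne (k := k)).comp Ψ = π :=
    QMn.algHom_ext fun i j => by rw [AlgHom.comp_apply, hΨ, evalOne_C_mul_T, hπ]
  have hπa : π a = b := by rw [← hev, AlgHom.comp_apply, hm, evalOne_C_mul_T]
  have hmem : Ψ a ∈ nonnegSubalgebra k _ :=
    QMn.map_mem_of_forall_X_mem Ψ _
      (fun i j => hΨ i j ▸ C_mul_T_mem_nonnegSubalgebra _ (by split_ifs <;> omega)) a
  rw [hm] at hmem
  obtain ⟨r, hr⟩ := exists_nat_of_C_mul_T_mem_nonnegSubalgebra hmem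
  exact ⟨r, by rw [hm, hr, hπa]⟩

open LaurentPolynomial in
/-- Let `a` be an `H`-eigenvector in `O_q(M_n(k))` for the standard torus action
(i.e. every algebra endomorphism scaling the generators by `X_{ij} ↦ α_i β_j X_{ij}`
sends `a` to a `k×`-multiple of itself).  Then under the Levasseur–Stafford map
`ξ` (given here by any algebra map `Ψ : O_q(M_n(k)) → O_q(SL_n(k))[z^{±1}]` with
`Ψ(X_{1j}) = z x_{1j}` and `Ψ(X_{ij}) = x_{ij}` for `i ≥ 2`), we have
`ξ(a) = z^r π(a)` for some integer `r ≥ 0`, where `π` is the quotient map to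
`O_q(SL_n(k))`. -/
theorem eigenvector_image_is_unit_multiple (k : Type) [Field k] (q : kˣ)
    (hq : ∀ m : ℕ, 0 < m → (q : k) ^ m ≠ 1) (n : ℕ)
    (a : QMn.OqM k q (n + 1)) (ha : a ≠ 0)
    (heig : ∀ (α β : Fin (n + 1) → kˣ) (φ : QMn.OqM k q (n + 1) →ₐ[k] QMn.OqM k q (n + 1)),
      (∀ i j : Fin (n + 1),
          φ (QMn.X k q (n + 1) i j) = ((α i * β j : kˣ) : k) • QMn.X k q (n + 1) i j) →
      ∃ c : kˣ, φ a = (c : k) • a)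
    (π : QMn.OqM k q (n + 1) →ₐ[k] QGL.OqSL k q (n + 1))
    (hπ : ∀ i j : Fin (n + 1), π (QMn.X k q (n + 1) i j) = QGL.xSL k q (n + 1) i j)
    (Ψ : QMn.OqM k q (n + 1) →ₐ[k] LaurentPolynomial (QGL.OqSL k q (n + 1)))
    (hΨ1 : ∀ j : Fin (n + 1),
      Ψ (QMn.X k q (n + 1) 0 j) = C (QGL.xSL k q (n + 1) 0 j) * T 1)
    (hΨ2 : ∀ i j : Fin (n + 1), i ≠ 0 →
      Ψ (QMn.X k q (n + 1) i j) = C (QGL.xSL k q (n + 1) i j)) :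
    ∃ r : ℕ, Ψ a = C (π a) * T r :=
  eigenvector_image_is_unit_multiple_general k q hq n a heig π hπ Ψ hΨ1 hΨ2
end
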